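/- arXiv:2511.18662 — 3 statements merged into one kernel-verified Lean document; each statement's English description precedes it below -/
import Mathlib

section
/- Let ν be a probability distribution supported on positive integers, Π(q) = ∑_k ν_k(1-(1-q)^k), let a_min ∈ (0,1], q₀ = Π⁻¹(a_min), and α* = min{q₀/(1-a_min), 1} (with α* = 1 if a_min = 1). Suppose q, q', a ∈ [0,1] satisfy: q' ≤ Π(q), a ≥ a_min, and if q > q₀ then q' - a ≤ 1 - a_min. If q ∈ (0, q₀] then q + α*(a - q') ≥ q; and if q > q₀ then q + α*(a - q') ≥ 0. In all cases q + α*(a - q') ≥ 0 whenever q > 0. -/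
/-- nonnegativity of the adjusted entry q + α*(a - q'). -/
theorem stmt_6 (Pi : ℝ → ℝ) (a_min q₀ αs q q' a : ℝ)
    (hPimono : MonotoneOn Pi (Set.Icc 0 1))
    (ham : a_min ∈ Set.Ioc (0 : ℝ) 1)
    (hq₀mem : q₀ ∈ Set.Icc (0 : ℝ) 1)
    (hq₀ : Pi q₀ = a_min)
    (hαs : αs = min (q₀ / (1 - a_min)) 1)
    (hαs1 : a_min = 1 → αs = 1)
    (hq : q ∈ Set.Icc (0 : ℝ) 1) (hq' : q' ∈ Set.Icc (0 : ℝ) 1)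
    (ha : a ∈ Set.Icc (0 : ℝ) 1)
    (hq'Pi : q' ≤ Pi q)
    (haMin : a_min ≤ a)
    (hextra : q > q₀ → q' - a ≤ 1 - a_min) :
    (q ∈ Set.Ioc (0 : ℝ) q₀ → q ≤ q + αs * (a - q')) ∧
    (q > q₀ → 0 ≤ q + αs * (a - q')) ∧
    (0 < q → 0 ≤ q + αs * (a - q')) := by
  rcases lt_or_eq_of_le ham.2 with ham1 | ham1
  swap
  · exfalso
    have h1 : αs = 1 := hαs1 ham1
    rw [ham1] at hαs
    norm_num at hαs
    linarith
  -- a_min < 1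
  have hden : (0:ℝ) < 1 - a_min := by linarith
  have hαs0 : 0 ≤ αs := by
    rw [hαs]
    exact le_min (div_nonneg hq₀mem.1 hden.le) one_pos.le
  have part1 : q ∈ Set.Ioc (0 : ℝ) q₀ → q ≤ q + αs * (a - q') := by
    intro hmem
    have hq'a : q' ≤ a := by
      have h1 : Pi q ≤ Pi q₀ := hPimono ⟨hq.1, hq.2⟩ hq₀mem hmem.2
      calc q' ≤ Pi q := hq'Pi
        _ ≤ Pi q₀ := h1
        _ = a_min := hq₀
        _ ≤ a := haMin
    nlinarith [mul_nonneg hαs0 (by linarith : (0:ℝ) ≤ a - q')]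
  have part2 : q > q₀ → 0 ≤ q + αs * (a - q') := by
    intro hgt
    have hext := hextra hgt
    rcases le_or_gt q' a with h | h
    · nlinarith [mul_nonneg hαs0 (by linarith : (0:ℝ) ≤ a - q'), hq.1]
    · have hαle : αs ≤ q₀ / (1 - a_min) := by rw [hαs]; exact min_le_left _ _
      have : αs * (q' - a) ≤ (q₀ / (1 - a_min)) * (1 - a_min) := by
        apply mul_le_mul hαle hext (by linarith) (div_nonneg hq₀mem.1 hden.le)
      rw [div_mul_cancel₀ _ hden.ne'] at this
      nlinarith
  refine ⟨part1, part2, fun hq0 => ?_⟩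
  rcases le_or_gt q q₀ with h | h
  · have := part1 ⟨hq0, h⟩; linarith [hq.1]
  · exact part2 h
end

section
/- Let Ω be a finite set, p ∈ Δ(Ω) with full support, ν₀ ∈ [0,1), α₁ ∈ (0,1], q¹ ∈ Δ(Ω), and suppose there exists q* ∈ Δ(Ω) and δ = ν₀/α₁ ≤ 1 with δ·p + (1-δ)·q* = q¹. Given weights α₁,…,α_l summing to 1 and posteriors q¹,…,q^l with ∑ᵢ αᵢ qⁱ = p, define α'₁ = (α₁ - ν₀)/(1 - ν₀), α'ᵢ = αᵢ/(1 - ν₀) for i ≥ 2, and q¹_* = q*, qⁱ_* = qⁱ for i ≥ 2. Then ∑ᵢ α'ᵢ = 1 and ∑ᵢ α'ᵢ qⁱ_* = p. -/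
/-- the adjusted posterior distribution is again Bayes-plausible. -/
theorem stmt_12 {Ω : Type*} [Fintype Ω] (l : ℕ) (hl : 0 < l)
    (p qstar : Ω → ℝ) (q : Fin l → Ω → ℝ) (α : Fin l → ℝ)
    (ν₀ δ : ℝ)
    (hp : p ∈ stdSimplex ℝ Ω) (hpfull : ∀ ω, 0 < p ω)
    (hq : ∀ i, q i ∈ stdSimplex ℝ Ω) (hqstar : qstar ∈ stdSimplex ℝ Ω)
    (hν₀ : ν₀ ∈ Set.Ico (0 : ℝ) 1)
    (hα1 : α ⟨0, hl⟩ ∈ Set.Ioc (0 : ℝ) 1)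
    (hαsum : ∑ i, α i = 1)
    (hbar : ∀ ω, ∑ i, α i * q i ω = p ω)
    (hδ : δ = ν₀ / α ⟨0, hl⟩) (hδ1 : δ ≤ 1)
    (hmix : ∀ ω, δ * p ω + (1 - δ) * qstar ω = q ⟨0, hl⟩ ω)
    (α' : Fin l → ℝ) (q' : Fin l → Ω → ℝ)
    (hα' : ∀ i, α' i = if i = ⟨0, hl⟩ then (α ⟨0, hl⟩ - ν₀) / (1 - ν₀)
      else α i / (1 - ν₀))
    (hq' : ∀ i, q' i = if i = ⟨0, hl⟩ then qstar else q i) :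
    ∑ i, α' i = 1 ∧ ∀ ω, ∑ i, α' i * q' i ω = p ω := by
  set i0 : Fin l := ⟨0, hl⟩ with hi0
  have hα1pos : 0 < α i0 := hα1.1
  have hc : (1 : ℝ) - ν₀ ≠ 0 := by
    have := hν₀.2; intro h; linarith
  have split : ∀ (f : Fin l → ℝ),
      ∑ i, f i = f i0 + ∑ i ∈ Finset.univ.erase i0, f i :=
    fun f => (Finset.add_sum_erase _ f (Finset.mem_univ i0)).symm
  have hδν : α i0 * δ = ν₀ := by
    rw [hδ]; field_simp
  have key : ∀ ω, (α i0 - ν₀) * qstar ω = α i0 * q i0 ω - ν₀ * p ω := by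
    intro ω
    have h := hmix ω
    linear_combination α i0 * h + (qstar ω - p ω) * hδν
  have herase : ∀ (f : Fin l → ℝ) (i : Fin l), i ∈ Finset.univ.erase i0 → ¬ (i = i0) :=
    fun f i hi => Finset.ne_of_mem_erase hi
  constructor
  · rw [split α']
    have h1 : α' i0 = (α i0 - ν₀) / (1 - ν₀) := by rw [hα' i0]; simp
    have h2 : ∑ i ∈ Finset.univ.erase i0, α' i = (∑ i ∈ Finset.univ.erase i0, α i) / (1 - ν₀) := by
      rw [Finset.sum_div]
      apply Finset.sum_congr rfl
      intro i hi
      rw [hα' i, if_neg (Finset.ne_of_mem_erase hi)]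
    have h3 : ∑ i ∈ Finset.univ.erase i0, α i = 1 - α i0 := by
      have := split α
      rw [hαsum] at this; linarith
    rw [h1, h2, h3]
    field_simp
    ring
  · intro ω
    rw [split (fun i => α' i * q' i ω)]
    have h1 : α' i0 * q' i0 ω = (α i0 - ν₀) / (1 - ν₀) * qstar ω := by
      rw [hα' i0, hq' i0]; simp
    have h2 : ∑ i ∈ Finset.univ.erase i0, α' i * q' i ω
        = (∑ i ∈ Finset.univ.erase i0, α i * q i ω) / (1 - ν₀) := by
      rw [Finset.sum_div]
      apply Finset.sum_congr rfl
      intro i hi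
      rw [hα' i, hq' i, if_neg (Finset.ne_of_mem_erase hi), if_neg (Finset.ne_of_mem_erase hi)]
      ring
    have h3 : ∑ i ∈ Finset.univ.erase i0, α i * q i ω = p ω - α i0 * q i0 ω := by
      have := split (fun i => α i * q i ω)
      rw [hbar ω] at this
      linarith
    rw [h1, h2, h3]
    have k := key ω
    field_simp
    nlinarith [k]
end

section
/- Let Ω be a finite set, p ∈ Δ(Ω) with full support, ν₀ ∈ (0,1), α₁ ∈ (0,1], α'₁ ∈ [0,1], p* ∈ Δ(Ω), q¹ ∈ Δ(Ω), with q¹ ≠ p. Suppose ν₀ + (1-ν₀)α'₁ = α₁ and (ν₀·p + (1-ν₀)α'₁·p*)/(ν₀ + (1-ν₀)α'₁) = q¹. Let β(q¹) be the maximal β ≥ 0 with p + β(q¹ − p) ∈ Δ(Ω). Then the weight ν₀/α₁ placed on p in the representation q¹ = (ν₀/α₁)p + (1 − ν₀/α₁)p* is at most α(q¹) = 1 − 1/β(q¹), i.e. ν₀/α₁ ≤ 1 − 1/β(q¹). -/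
/-- necessity direction of Theorem 2: ν₀/α₁ ≤ 1 - 1/β(q¹). -/
theorem stmt_13 {Ω : Type*} [Fintype Ω] (p pstar q1 : Ω → ℝ)
    (ν₀ α₁ α'₁ β : ℝ)
    (hp : p ∈ stdSimplex ℝ Ω) (hpfull : ∀ ω, 0 < p ω)
    (hpstar : pstar ∈ stdSimplex ℝ Ω) (hq1 : q1 ∈ stdSimplex ℝ Ω)
    (hν₀ : ν₀ ∈ Set.Ioo (0 : ℝ) 1) (hα₁ : α₁ ∈ Set.Ioc (0 : ℝ) 1)
    (hα'₁ : α'₁ ∈ Set.Icc (0 : ℝ) 1)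
    (hsum : ν₀ + (1 - ν₀) * α'₁ = α₁)
    (hmix : ∀ ω, (ν₀ * p ω + (1 - ν₀) * α'₁ * pstar ω) / (ν₀ + (1 - ν₀) * α'₁) = q1 ω)
    (hq1p : q1 ≠ p)
    (hβ : IsGreatest {b : ℝ | 0 ≤ b ∧
      (fun ω => p ω + b * (q1 ω - p ω)) ∈ stdSimplex ℝ Ω} β) :
    ν₀ / α₁ ≤ 1 - 1 / β := by
  obtain ⟨hν0, hν1⟩ := hν₀
  obtain ⟨hα0, hα1⟩ := hα₁
  obtain ⟨hα'0, hα'1⟩ := hα'₁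
  -- α'₁ > 0, else q1 = p
  have hα'pos : 0 < α'₁ := by
    rcases lt_or_eq_of_le hα'0 with h | h
    · exact h
    · exfalso
      apply hq1p
      funext ω
      have := hmix ω
      rw [← h] at this
      simp at this
      rw [← this]
      field_simp
  have hden : 0 < (1 - ν₀) * α'₁ := mul_pos (by linarith) hα'pos
  -- key: pstar = p + (α₁/((1-ν₀)α'₁)) (q1 - p)
  set b₀ : ℝ := α₁ / ((1 - ν₀) * α'₁) with hb₀
  have hb₀pos : 0 < b₀ := div_pos hα0 hden
  have hmem : (fun ω => p ω + b₀ * (q1 ω - p ω)) ∈ stdSimplex ℝ Ω := by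
    have heq : (fun ω => p ω + b₀ * (q1 ω - p ω)) = pstar := by
      funext ω
      have h := hmix ω
      rw [hsum] at h
      have h2 : ν₀ * p ω + (1 - ν₀) * α'₁ * pstar ω = q1 ω * α₁ := by
        field_simp at h
        linarith
      rw [hb₀]
      field_simp
      linear_combination p ω * hsum - h2
    rw [heq]; exact hpstar
  have hle : b₀ ≤ β := hβ.2 ⟨le_of_lt hb₀pos, hmem⟩
  have hβpos : 0 < β := lt_of_lt_of_le hb₀pos hle
  have hinv : 1 / β ≤ 1 / b₀ := one_div_le_one_div_of_le hb₀pos hle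
  have hb₀inv : 1 / b₀ = (1 - ν₀) * α'₁ / α₁ := by
    rw [hb₀, one_div_div]
  have : ν₀ / α₁ + (1 - ν₀) * α'₁ / α₁ = 1 := by
    field_simp
    linarith
  rw [hb₀inv] at hinv
  linarith
end
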